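/- arXiv:2402.14578 — 5 statements merged into one kernel-verified Lean document; each statement's English description precedes it below -/
import Mathlib

section
/- Let T ∈ ℕ, and for each t = 1,…,T let X_t ∈ ℝ^{n_t×d} and y_t ∈ ℝ^{n_t}. Let Λ_1,…,Λ_T ∈ ℝ^{d×d} be symmetric matrices with 0 ≺ Λ_1 ⪯ Λ_2 ⪯ ⋯ ⪯ Λ_T, and let the MultiVAW iterates be θ_t = A_t^{-1} b_{t-1}. Set ȳ = max_{t∈[T]} ‖y_t‖₂. Then for every θ ∈ ℝ^d, the regret satisfies R_T(θ) ≤ θᵀ Λ_T θ + ȳ² · Σ_{i=1}^d log( λ_i(A_T) / λ_i(Λ_1) ), where λ_i(M) denotes the i-th largest eigenvalue of a symmetric matrix M. -/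
open Matrix Finset

noncomputable section

/-- `μ` lists the eigenvalues of the Hermitian matrix `A` in decreasing order:
`μ i` is the `i`-th largest eigenvalue of `A`. -/
def IsDecrEigSeq {d : ℕ} {A : Matrix (Fin d) (Fin d) ℝ} (hA : A.IsHermitian)
    (μ : Fin d → ℝ) : Prop :=
  Antitone μ ∧ ∃ σ : Equiv.Perm (Fin d), μ = hA.eigenvalues ∘ σ

/-!
Put `B_t = Λ_t + ∑_{s<t} X_sᵀX_s`, the matrix `A_t` before `X_t` is revealed, so that
`A_t = B_t + X_tᵀX_t` and `A_t ⪯ B_{t+1}`. Completing the square gives the one-step bound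
`‖X_tθ_t - y_t‖² ≤ ‖y_t‖² - b_tᵀA_t⁻¹b_t + b_{t-1}ᵀB_t⁻¹b_{t-1} + (X_tᵀy_t)ᵀA_t⁻¹(X_tᵀy_t)`,
and the last term is at most `‖y_t‖² tr(A_t⁻¹X_tᵀX_t) ≤ ‖y_t‖² (log det A_t - log det B_t)`
by concavity of `log det`. Because `A_t ⪯ B_{t+1}`, both `bᵀA⁻¹b` and `log det` telescope, so the
learner's loss is at most `∑‖y_t‖² - b_TᵀA_T⁻¹b_T + ȳ² log (det A_T / det Λ_1)`, while completing
the square once more shows that the competitor's loss is at least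
`∑‖y_t‖² - b_TᵀA_T⁻¹b_T - θᵀΛ_Tθ`.
-/

open scoped MatrixOrder

namespace Matrix

section

variable {n : Type*} [Fintype n]

theorem dotProduct_self_eq_sum_sq (v : n → ℝ) : v ⬝ᵥ v = ∑ i, v i ^ 2 := by
  simp only [dotProduct, sq]

theorem IsSymm.dotProduct_mulVec_comm {A : Matrix n n ℝ} (hA : A.IsSymm) (x y : n → ℝ) :
    x ⬝ᵥ A *ᵥ y = y ⬝ᵥ A *ᵥ x := by
  rw [← dotProduct_transpose_mulVec, hA.eq]

omit [Fintype n] in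
theorem PosDef.isSymm {A : Matrix n n ℝ} (hA : A.PosDef) : A.IsSymm :=
  isHermitian_iff_isSymm.mp hA.isHermitian

theorem PosSemidef.dotProduct_mulVec_le_trace_mul {M : Matrix n n ℝ} (hM : M.PosSemidef)
    (y : n → ℝ) : y ⬝ᵥ M *ᵥ y ≤ M.trace * (y ⬝ᵥ y) := by
  classical
  obtain ⟨R, rfl⟩ := CStarAlgebra.nonneg_iff_eq_star_mul_self.mp hM.nonneg
  have hrow : ∀ i, (R *ᵥ y) i ^ 2 ≤ (∑ j, R i j ^ 2) * (y ⬝ᵥ y) := fun i => by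
    simpa [mulVec, dotProduct, sq] using sum_mul_sq_le_sq_mul_sq univ (R i) y
  calc y ⬝ᵥ (star R * R) *ᵥ y = ∑ i, (R *ᵥ y) i ^ 2 := by
        rw [← mulVec_mulVec, star_eq_conjTranspose, conjTranspose_eq_transpose_of_trivial,
          dotProduct_transpose_mulVec, dotProduct_self_eq_sum_sq]
    _ ≤ ∑ i, (∑ j, R i j ^ 2) * (y ⬝ᵥ y) := sum_le_sum fun i _ => hrow i
    _ = (star R * R).trace * (y ⬝ᵥ y) := by
        rw [← sum_mul, sum_comm]
        simp [trace, mul_apply, sq]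

theorem PosSemidef.trace_mul_nonneg {A B : Matrix n n ℝ} (hA : A.PosSemidef)
    (hB : B.PosSemidef) : 0 ≤ (A * B).trace := by
  classical
  obtain ⟨R, rfl⟩ := CStarAlgebra.nonneg_iff_eq_star_mul_self.mp hB.nonneg
  rw [← Matrix.mul_assoc, trace_mul_comm, ← Matrix.mul_assoc, star_eq_conjTranspose]
  exact (hA.mul_mul_conjTranspose_same R).trace_nonneg

theorem posSemidef_transpose_mul_self {m : Type*} [Fintype m] (X : Matrix m n ℝ) :
    (Xᵀ * X).PosSemidef := by
  simpa using posSemidef_conjTranspose_mul_self X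

theorem PosDef.add_sum_transpose_mul_self {ι : Type*} {k : ι → ℕ} {B : Matrix n n ℝ}
    (hB : B.PosDef) (s : Finset ι) (X : (t : ι) → Matrix (Fin (k t)) n ℝ) :
    (B + ∑ t ∈ s, (X t)ᵀ * X t).PosDef :=
  hB.add_posSemidef <| posSemidef_sum s fun t _ => posSemidef_transpose_mul_self (X t)

omit [Fintype n] in
theorem PosDef.of_le {A B : Matrix n n ℝ} (hA : A.PosDef) (hAB : A ≤ B) : B.PosDef := by
  simpa using hA.add_posSemidef hAB

omit [Fintype n] in
theorem posDef_of_le_succ {T : ℕ} {Λ : ℕ → Matrix n n ℝ} (hΛ1 : (Λ 1).PosDef)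
    (hΛmono : ∀ t, 1 ≤ t → t + 1 ≤ T → Λ t ≤ Λ (t + 1)) : ∀ t ∈ Icc 1 T, (Λ t).PosDef := by
  have hmono : MonotoneOn Λ (Set.Icc 1 T) :=
    monotoneOn_of_le_succ Set.ordConnected_Icc fun t _ ht hst => by
      rw [Order.succ_eq_add_one] at hst ⊢
      exact hΛmono t ht.1 hst.2
  intro t ht
  rw [mem_Icc] at ht
  exact hΛ1.of_le (hmono ⟨le_rfl, ht.1.trans ht.2⟩ ht ht.1)

variable [DecidableEq n]

theorem PosDef.mulVec_inv_mulVec {A : Matrix n n ℝ} (hA : A.PosDef) (b : n → ℝ) :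
    A *ᵥ (A⁻¹ *ᵥ b) = b := by
  rw [mulVec_mulVec, mul_nonsing_inv _ ((isUnit_iff_isUnit_det A).mp hA.isUnit), one_mulVec]

theorem PosDef.two_mul_dotProduct_sub_le {A : Matrix n n ℝ} (hA : A.PosDef) (b v : n → ℝ) :
    2 * (b ⬝ᵥ v) - v ⬝ᵥ A *ᵥ v ≤ b ⬝ᵥ A⁻¹ *ᵥ b := by
  set u := A⁻¹ *ᵥ b
  have hAu : A *ᵥ u = b := hA.mulVec_inv_mulVec b
  have hsq : 0 ≤ (v - u) ⬝ᵥ A *ᵥ (v - u) := by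
    simpa using hA.posSemidef.dotProduct_mulVec_nonneg (v - u)
  rw [mulVec_sub, dotProduct_sub, sub_dotProduct, sub_dotProduct,
    hA.isSymm.dotProduct_mulVec_comm u v, hAu, dotProduct_comm v b, dotProduct_comm u b] at hsq
  linarith

theorem PosDef.dotProduct_inv_mulVec_le_of_le {A B : Matrix n n ℝ} (hA : A.PosDef) (hAB : A ≤ B)
    (b : n → ℝ) : b ⬝ᵥ B⁻¹ *ᵥ b ≤ b ⬝ᵥ A⁻¹ *ᵥ b := by
  have hB : B.PosDef := hA.of_le hAB
  set v := B⁻¹ *ᵥ b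
  have hgap : 0 ≤ v ⬝ᵥ (B - A) *ᵥ v := by
    simpa using (le_iff.mp hAB).dotProduct_mulVec_nonneg v
  rw [sub_mulVec, dotProduct_sub, hB.mulVec_inv_mulVec, dotProduct_comm v b] at hgap
  linarith [hA.two_mul_dotProduct_sub_le b v]

theorem PosDef.log_det_le_trace_sub_card {M : Matrix n n ℝ} (hM : M.PosDef) :
    Real.log M.det ≤ M.trace - Fintype.card n := by
  have hpos := hM.eigenvalues_pos
  rw [hM.isHermitian.det_eq_prod_eigenvalues, hM.isHermitian.trace_eq_sum_eigenvalues]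
  simp only [RCLike.ofReal_real_eq_id, id]
  rw [Real.log_prod fun i _ => (hpos i).ne']
  calc ∑ i, Real.log (hM.isHermitian.eigenvalues i)
      ≤ ∑ i, (hM.isHermitian.eigenvalues i - 1) :=
        sum_le_sum fun i _ => Real.log_le_sub_one_of_pos (hpos i)
    _ = _ := by simp [sum_sub_distrib]

/-- Concavity of `log det`: it lies below its tangent plane at `A`, whose gradient is `A⁻¹`.
Conjugating by `A^{-1/2}` reduces it to `log det M ≤ tr M - card n`. -/
theorem PosDef.log_det_le_log_det_add_trace {A B : Matrix n n ℝ} (hA : A.PosDef) (hB : B.PosDef) :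
    Real.log B.det ≤ Real.log A.det + (A⁻¹ * (B - A)).trace := by
  set R := CFC.sqrt A
  have hRR : R * R = A := CFC.sqrt_mul_sqrt_self A hA.posSemidef.nonneg
  have hR : R.IsSymm := isHermitian_iff_isSymm.mp (CFC.sqrt_nonneg A).posSemidef.isHermitian
  have hRdet : R.det * R.det = A.det := by rw [← det_mul, hRR]
  have hRdet0 : IsUnit R.det := isUnit_iff_ne_zero.mpr fun h => hA.det_pos.ne' <| by
    rw [← hRdet, h, mul_zero]
  have hRinv : R⁻¹.IsSymm := hR.inv
  have hRinv_sq : R⁻¹ * R⁻¹ = A⁻¹ := by rw [← mul_inv_rev, hRR]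
  have hconj : R⁻¹ * A * R⁻¹ = 1 := by
    calc R⁻¹ * A * R⁻¹ = (R⁻¹ * R) * (R * R⁻¹) := by simp only [← hRR, Matrix.mul_assoc]
      _ = 1 := by rw [nonsing_inv_mul _ hRdet0, mul_nonsing_inv _ hRdet0, Matrix.one_mul]
  have hM : (R⁻¹ * B * R⁻¹).PosDef := by
    have hunit : IsUnit R⁻¹ := (isUnit_iff_isUnit_det _).mpr (isUnit_nonsing_inv_det R hRdet0)
    have := (IsUnit.posDef_star_right_conjugate_iff (x := B) hunit).mpr hB
    rwa [star_eq_conjTranspose, conjTranspose_eq_transpose_of_trivial, hRinv.eq] at this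
  have hdet : (R⁻¹ * B * R⁻¹).det * A.det = B.det := by
    have hinv : R⁻¹.det * R.det = 1 := by rw [← det_mul, nonsing_inv_mul _ hRdet0, det_one]
    rw [← hRdet, det_mul, det_mul]
    linear_combination B.det * (R⁻¹.det * R.det + 1) * hinv
  have htrace : (R⁻¹ * B * R⁻¹).trace - Fintype.card n = (A⁻¹ * (B - A)).trace := by
    rw [← trace_one, ← hconj, ← trace_sub, ← sub_mul, ← mul_sub, trace_mul_comm,
      ← Matrix.mul_assoc, hRinv_sq]
  have hlog : Real.log (R⁻¹ * B * R⁻¹).det + Real.log A.det = Real.log B.det := by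
    rw [← Real.log_mul hM.det_pos.ne' hA.det_pos.ne', hdet]
  linarith [hM.log_det_le_trace_sub_card]

theorem PosDef.log_det_le_log_det_of_le {A B : Matrix n n ℝ} (hA : A.PosDef) (hAB : A ≤ B) :
    Real.log A.det ≤ Real.log B.det := by
  have hB : B.PosDef := hA.of_le hAB
  have hgap : 0 ≤ (B⁻¹ * (B - A)).trace := hB.posSemidef.inv.trace_mul_nonneg hAB
  have htangent := hB.log_det_le_log_det_add_trace hA
  rw [← neg_sub, Matrix.mul_neg, trace_neg] at htangent
  linarith

variable {m : Type*} [Fintype m]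

theorem PosDef.dotProduct_inv_mulVec_le_log_det {B : Matrix n n ℝ} (hB : B.PosDef)
    (X : Matrix m n ℝ) (y : m → ℝ) :
    (Xᵀ *ᵥ y) ⬝ᵥ (B + Xᵀ * X)⁻¹ *ᵥ (Xᵀ *ᵥ y)
      ≤ (y ⬝ᵥ y) * (Real.log (B + Xᵀ * X).det - Real.log B.det) := by
  set A := B + Xᵀ * X
  have hA : A.PosDef := hB.add_posSemidef (posSemidef_transpose_mul_self X)
  have hquad : (Xᵀ *ᵥ y) ⬝ᵥ A⁻¹ *ᵥ (Xᵀ *ᵥ y) = y ⬝ᵥ (X * A⁻¹ * Xᵀ) *ᵥ y := by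
    rw [dotProduct_comm, dotProduct_transpose_mulVec, mulVec_mulVec, mulVec_mulVec]
  have hpsd : (X * A⁻¹ * Xᵀ).PosSemidef := by
    simpa using hA.inv.posSemidef.mul_mul_conjTranspose_same X
  have htrace : (X * A⁻¹ * Xᵀ).trace = -(A⁻¹ * (B - A)).trace := by
    rw [trace_mul_comm, ← Matrix.mul_assoc, trace_mul_comm, ← trace_neg, ← Matrix.mul_neg,
      neg_sub, add_sub_cancel_left]
  have htangent := hA.log_det_le_log_det_add_trace hB
  rw [hquad]
  calc y ⬝ᵥ (X * A⁻¹ * Xᵀ) *ᵥ y ≤ (X * A⁻¹ * Xᵀ).trace * (y ⬝ᵥ y) :=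
        hpsd.dotProduct_mulVec_le_trace_mul y
    _ ≤ (Real.log A.det - Real.log B.det) * (y ⬝ᵥ y) :=
        mul_le_mul_of_nonneg_right (by linarith) (dotProduct_self_star_nonneg y)
    _ = _ := mul_comm _ _

omit [DecidableEq n] in
theorem mulVec_sub_dotProduct_self (X : Matrix m n ℝ) (v : n → ℝ) (y : m → ℝ) :
    (X *ᵥ v - y) ⬝ᵥ (X *ᵥ v - y) = v ⬝ᵥ (Xᵀ * X) *ᵥ v - 2 * ((Xᵀ *ᵥ y) ⬝ᵥ v) + y ⬝ᵥ y := by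
  rw [← mulVec_mulVec, dotProduct_transpose_mulVec, dotProduct_comm _ v,
    dotProduct_transpose_mulVec, sub_dotProduct, dotProduct_sub, dotProduct_sub,
    dotProduct_comm y]
  ring

end

end Matrix

theorem sum_Icc_sub_le_of_le_succ {u v : ℕ → ℝ} {T : ℕ} (hT : 1 ≤ T)
    (h : ∀ t ∈ Ico 1 T, u t ≤ v (t + 1)) : ∑ t ∈ Icc 1 T, (u t - v t) ≤ u T - v 1 := by
  induction T, hT using Nat.le_induction with
  | base => simp
  | succ T hT ih =>
    rw [sum_Icc_succ_top (by omega)]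
    have hprev := ih fun t ht => h t (by simp only [mem_Ico] at ht ⊢; omega)
    have hlink := h T (by simp only [mem_Ico]; omega)
    linarith

theorem sum_Icc_one_eq_sum_Icc_pred_add {M : Type*} [AddCommMonoid M] (f : ℕ → M) {t : ℕ}
    (ht : 1 ≤ t) : ∑ s ∈ Icc 1 t, f s = ∑ s ∈ Icc 1 (t - 1), f s + f t := by
  obtain ⟨k, rfl⟩ := Nat.exists_eq_add_of_le' ht
  simp [sum_Icc_succ_top]

section VAW

variable {n m : Type*} [Fintype n] [DecidableEq n] [Fintype m]

theorem vaw_step_loss_le {B : Matrix n n ℝ} (hB : B.PosDef) (X : Matrix m n ℝ) (b : n → ℝ)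
    (y : m → ℝ) {c : ℝ} (hc : y ⬝ᵥ y ≤ c) :
    (X *ᵥ ((B + Xᵀ * X)⁻¹ *ᵥ b) - y) ⬝ᵥ (X *ᵥ ((B + Xᵀ * X)⁻¹ *ᵥ b) - y)
      ≤ y ⬝ᵥ y - (b + Xᵀ *ᵥ y) ⬝ᵥ (B + Xᵀ * X)⁻¹ *ᵥ (b + Xᵀ *ᵥ y) + b ⬝ᵥ B⁻¹ *ᵥ b
        + c * (Real.log (B + Xᵀ * X).det - Real.log B.det) := by
  have hP : (Xᵀ * X).PosSemidef := posSemidef_transpose_mul_self X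
  have hBA : B ≤ B + Xᵀ * X := le_iff.mpr (by simpa using hP)
  set A := B + Xᵀ * X
  have hA : A.PosDef := hB.add_posSemidef hP
  set u := A⁻¹ *ᵥ b
  set z := Xᵀ *ᵥ y
  have hsplit : u ⬝ᵥ B *ᵥ u + u ⬝ᵥ (Xᵀ * X) *ᵥ u = b ⬝ᵥ u := by
    rw [← dotProduct_add, ← add_mulVec, hA.mulVec_inv_mulVec, dotProduct_comm]
  have hexpand : (b + z) ⬝ᵥ A⁻¹ *ᵥ (b + z) = b ⬝ᵥ u + 2 * (z ⬝ᵥ u) + z ⬝ᵥ A⁻¹ *ᵥ z := by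
    rw [mulVec_add, dotProduct_add, add_dotProduct, add_dotProduct,
      hA.inv.isSymm.dotProduct_mulVec_comm b z]
    ring
  have hlog : z ⬝ᵥ A⁻¹ *ᵥ z ≤ c * (Real.log A.det - Real.log B.det) :=
    (hB.dotProduct_inv_mulVec_le_log_det X y).trans <| mul_le_mul_of_nonneg_right hc <|
      sub_nonneg.mpr (hB.log_det_le_log_det_of_le hBA)
  rw [mulVec_sub_dotProduct_self]
  linarith [hB.two_mul_dotProduct_sub_le b u]

theorem sum_vaw_loss_le {T : ℕ} (hT : 1 ≤ T) {k : ℕ → ℕ} (X : (t : ℕ) → Matrix (Fin (k t)) n ℝ)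
    (y : (t : ℕ) → Fin (k t) → ℝ) (B A : ℕ → Matrix n n ℝ) (b : ℕ → n → ℝ) {c : ℝ}
    (hB : ∀ t ∈ Icc 1 T, (B t).PosDef)
    (hA : ∀ t ∈ Icc 1 T, A t = B t + (X t)ᵀ * X t)
    (hb : ∀ t ∈ Icc 1 T, b t = b (t - 1) + (X t)ᵀ *ᵥ y t)
    (hAB : ∀ t ∈ Ico 1 T, A t ≤ B (t + 1))
    (hy : ∀ t ∈ Icc 1 T, y t ⬝ᵥ y t ≤ c) :
    ∑ t ∈ Icc 1 T, (X t *ᵥ ((A t)⁻¹ *ᵥ b (t - 1)) - y t) ⬝ᵥ (X t *ᵥ ((A t)⁻¹ *ᵥ b (t - 1)) - y t)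
      ≤ ∑ t ∈ Icc 1 T, y t ⬝ᵥ y t - b T ⬝ᵥ (A T)⁻¹ *ᵥ b T + b 0 ⬝ᵥ (B 1)⁻¹ *ᵥ b 0
        + c * (Real.log (A T).det - Real.log (B 1).det) := by
  set q : ℕ → ℝ := fun t => b t ⬝ᵥ (A t)⁻¹ *ᵥ b t
  set p : ℕ → ℝ := fun t => b (t - 1) ⬝ᵥ (B t)⁻¹ *ᵥ b (t - 1)
  set ℓA : ℕ → ℝ := fun t => Real.log (A t).det
  set ℓB : ℕ → ℝ := fun t => Real.log (B t).det
  have hApd : ∀ t ∈ Icc 1 T, (A t).PosDef := fun t ht => by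
    rw [hA t ht]
    exact (hB t ht).add_posSemidef (posSemidef_transpose_mul_self (X t))
  have hstep : ∀ t ∈ Icc 1 T,
      (X t *ᵥ ((A t)⁻¹ *ᵥ b (t - 1)) - y t) ⬝ᵥ (X t *ᵥ ((A t)⁻¹ *ᵥ b (t - 1)) - y t)
        ≤ y t ⬝ᵥ y t + (p t - q t) + c * (ℓA t - ℓB t) := fun t ht => by
    have := vaw_step_loss_le (hB t ht) (X t) (b (t - 1)) (y t) (hy t ht)
    rw [← hA t ht, ← hb t ht] at this
    simp only [q, p, ℓA, ℓB]
    linarith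
  have hq : ∑ t ∈ Icc 1 T, (p t - q t) ≤ p 1 - q T := by
    simpa only [neg_sub_neg] using sum_Icc_sub_le_of_le_succ (u := (-q ·)) (v := (-p ·)) hT
      fun t ht => neg_le_neg <| by
        simpa only [p, Nat.add_sub_cancel] using
          (hApd t (Ico_subset_Icc_self ht)).dotProduct_inv_mulVec_le_of_le (hAB t ht) (b t)
  have hℓ : ∑ t ∈ Icc 1 T, (ℓA t - ℓB t) ≤ ℓA T - ℓB 1 :=
    sum_Icc_sub_le_of_le_succ hT fun t ht =>
      (hApd t (Ico_subset_Icc_self ht)).log_det_le_log_det_of_le (hAB t ht)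
  have hc : 0 ≤ c := (dotProduct_self_star_nonneg (y 1)).trans (hy 1 (by simp [hT]))
  calc _ ≤ ∑ t ∈ Icc 1 T, (y t ⬝ᵥ y t + (p t - q t) + c * (ℓA t - ℓB t)) := sum_le_sum hstep
    _ = ∑ t ∈ Icc 1 T, y t ⬝ᵥ y t + ∑ t ∈ Icc 1 T, (p t - q t)
          + c * ∑ t ∈ Icc 1 T, (ℓA t - ℓB t) := by rw [sum_add_distrib, sum_add_distrib, mul_sum]
    _ ≤ _ := by
      have := mul_le_mul_of_nonneg_left hℓ hc
      simp only [q, p, ℓA, ℓB, Nat.sub_self] at hq this ⊢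
      linarith

theorem le_sum_mulVec_sub_dotProduct_self {k : ℕ → ℕ} (s : Finset ℕ)
    (X : (t : ℕ) → Matrix (Fin (k t)) n ℝ) (y : (t : ℕ) → Fin (k t) → ℝ) {Λ A : Matrix n n ℝ}
    (hA : A = Λ + ∑ t ∈ s, (X t)ᵀ * X t) (hApd : A.PosDef) (v : n → ℝ) :
    ∑ t ∈ s, y t ⬝ᵥ y t - (∑ t ∈ s, (X t)ᵀ *ᵥ y t) ⬝ᵥ A⁻¹ *ᵥ (∑ t ∈ s, (X t)ᵀ *ᵥ y t)
        - v ⬝ᵥ Λ *ᵥ v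
      ≤ ∑ t ∈ s, (X t *ᵥ v - y t) ⬝ᵥ (X t *ᵥ v - y t) := by
  have hexp : ∑ t ∈ s, (X t *ᵥ v - y t) ⬝ᵥ (X t *ᵥ v - y t)
      = v ⬝ᵥ (∑ t ∈ s, (X t)ᵀ * X t) *ᵥ v - 2 * ((∑ t ∈ s, (X t)ᵀ *ᵥ y t) ⬝ᵥ v)
        + ∑ t ∈ s, y t ⬝ᵥ y t := by
    simp only [mulVec_sub_dotProduct_self, sum_add_distrib, sum_sub_distrib, sum_mulVec,
      dotProduct_sum, sum_dotProduct, mul_sum]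
  have hAv : v ⬝ᵥ A *ᵥ v = v ⬝ᵥ Λ *ᵥ v + v ⬝ᵥ (∑ t ∈ s, (X t)ᵀ * X t) *ᵥ v := by
    rw [hA, add_mulVec, dotProduct_add]
  linarith [hApd.two_mul_dotProduct_sub_le (∑ t ∈ s, (X t)ᵀ *ᵥ y t) v]

end VAW

section MultiVAW

variable {d : ℕ}

theorem IsDecrEigSeq.sum_log_eq_log_det {M : Matrix (Fin d) (Fin d) ℝ} {hM : M.IsHermitian}
    {μ : Fin d → ℝ} (hμ : IsDecrEigSeq hM μ) (hMpd : M.PosDef) :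
    ∑ i, Real.log (μ i) = Real.log M.det := by
  obtain ⟨-, σ, rfl⟩ := hμ
  rw [hM.det_eq_prod_eigenvalues]
  simp only [RCLike.ofReal_real_eq_id, id, Function.comp_apply]
  rw [Real.log_prod fun i _ => (hMpd.eigenvalues_pos i).ne']
  exact Equiv.sum_comp σ fun i => Real.log (hM.eigenvalues i)

theorem IsDecrEigSeq.pos {M : Matrix (Fin d) (Fin d) ℝ} {hM : M.IsHermitian} {μ : Fin d → ℝ}
    (hμ : IsDecrEigSeq hM μ) (hMpd : M.PosDef) (i : Fin d) : 0 < μ i := by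
  obtain ⟨-, σ, rfl⟩ := hμ
  exact hMpd.eigenvalues_pos (σ i)

theorem IsDecrEigSeq.sum_log_div_eq {M N : Matrix (Fin d) (Fin d) ℝ} {hM : M.IsHermitian}
    {hN : N.IsHermitian} {μ ν : Fin d → ℝ} (hμ : IsDecrEigSeq hM μ) (hν : IsDecrEigSeq hN ν)
    (hMpd : M.PosDef) (hNpd : N.PosDef) :
    ∑ i, Real.log (μ i / ν i) = Real.log M.det - Real.log N.det := by
  simp only [Real.log_div (hμ.pos hMpd _).ne' (hν.pos hNpd _).ne', sum_sub_distrib,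
    hμ.sum_log_eq_log_det hMpd, hν.sum_log_eq_log_det hNpd]

theorem multivaw_cumulative_loss_le {T : ℕ} (hT : 1 ≤ T) {n : ℕ → ℕ}
    (X : (t : ℕ) → Matrix (Fin (n t)) (Fin d) ℝ) (y : (t : ℕ) → Fin (n t) → ℝ)
    (Λ A : ℕ → Matrix (Fin d) (Fin d) ℝ) (b : ℕ → Fin d → ℝ) {c : ℝ}
    (hΛ : ∀ t ∈ Icc 1 T, (Λ t).PosDef)
    (hΛmono : ∀ t, 1 ≤ t → t + 1 ≤ T → Λ t ≤ Λ (t + 1))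
    (hA : ∀ t ∈ Icc 1 T, A t = Λ t + ∑ s ∈ Icc 1 t, (X s)ᵀ * X s)
    (hb : ∀ t ≤ T, b t = ∑ s ∈ Icc 1 t, (X s)ᵀ *ᵥ y s)
    (hy : ∀ t ∈ Icc 1 T, y t ⬝ᵥ y t ≤ c) :
    ∑ t ∈ Icc 1 T, (X t *ᵥ ((A t)⁻¹ *ᵥ b (t - 1)) - y t) ⬝ᵥ (X t *ᵥ ((A t)⁻¹ *ᵥ b (t - 1)) - y t)
      ≤ ∑ t ∈ Icc 1 T, y t ⬝ᵥ y t - b T ⬝ᵥ (A T)⁻¹ *ᵥ b T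
        + c * (Real.log (A T).det - Real.log (Λ 1).det) := by
  set B : ℕ → Matrix (Fin d) (Fin d) ℝ := fun t => Λ t + ∑ s ∈ Icc 1 (t - 1), (X s)ᵀ * X s
  have hB : ∀ t ∈ Icc 1 T, (B t).PosDef := fun t ht =>
    (hΛ t ht).add_sum_transpose_mul_self _ X
  have hAB : ∀ t ∈ Icc 1 T, A t = B t + (X t)ᵀ * X t := fun t ht => by
    rw [hA t ht, sum_Icc_one_eq_sum_Icc_pred_add _ (mem_Icc.mp ht).1, add_assoc]
  have hbb : ∀ t ∈ Icc 1 T, b t = b (t - 1) + (X t)ᵀ *ᵥ y t := fun t ht => by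
    rw [hb t (mem_Icc.mp ht).2, hb (t - 1) ((Nat.sub_le t 1).trans (mem_Icc.mp ht).2),
      sum_Icc_one_eq_sum_Icc_pred_add _ (mem_Icc.mp ht).1]
  have hBA : ∀ t ∈ Ico 1 T, A t ≤ B (t + 1) := fun t ht => by
    have := hΛmono t (mem_Ico.mp ht).1 (mem_Ico.mp ht).2
    rw [le_iff] at this ⊢
    simpa only [hA t (Ico_subset_Icc_self ht), B, Nat.add_sub_cancel, add_sub_add_right_eq_sub]
  have := sum_vaw_loss_le hT X y B A b hB hAB hbb hBA hy
  simpa [B, hb 0 (Nat.zero_le T)] using this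

end MultiVAW

theorem multivaw_regret_bound_general
    (T d : ℕ) (hT : 1 ≤ T)
    (n : ℕ → ℕ)
    (X : (t : ℕ) → Matrix (Fin (n t)) (Fin d) ℝ)
    (y : (t : ℕ) → Fin (n t) → ℝ)
    (Λ : ℕ → Matrix (Fin d) (Fin d) ℝ)
    (hΛ1pos : (Λ 1).PosDef)
    (hΛmono : ∀ t, 1 ≤ t → t + 1 ≤ T → (Λ (t + 1) - Λ t).PosSemidef)
    (A : ℕ → Matrix (Fin d) (Fin d) ℝ)
    (hA : ∀ t ∈ Icc 1 T, A t = Λ t + ∑ s ∈ Icc 1 t, (X s)ᵀ * X s)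
    (b : ℕ → (Fin d → ℝ))
    (hb : ∀ t ≤ T, b t = ∑ s ∈ Icc 1 t, (X s)ᵀ.mulVec (y s))
    (θ : ℕ → (Fin d → ℝ))
    (hθ : ∀ t ∈ Icc 1 T, θ t = (A t)⁻¹.mulVec (b (t - 1)))
    (ybar : ℝ)
    (hybar : ybar = (Icc 1 T).sup' (Finset.nonempty_Icc.mpr hT)
      (fun t => Real.sqrt (∑ i, (y t i) ^ 2)))
    (hAT : (A T).IsHermitian)
    (μA μΛ : Fin d → ℝ)
    (hμA : IsDecrEigSeq hAT μA)
    (hμΛ : IsDecrEigSeq hΛ1pos.isHermitian μΛ)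
    (θc : Fin d → ℝ) :
    (∑ t ∈ Icc 1 T, ∑ i, ((X t).mulVec (θ t) - y t) i ^ 2)
      - ∑ t ∈ Icc 1 T, ∑ i, ((X t).mulVec θc - y t) i ^ 2
    ≤ θc ⬝ᵥ (Λ T).mulVec θc + ybar ^ 2 * ∑ i, Real.log (μA i / μΛ i) := by
  have hΛ : ∀ t ∈ Icc 1 T, (Λ t).PosDef := posDef_of_le_succ hΛ1pos hΛmono
  have hTmem : T ∈ Icc 1 T := right_mem_Icc.mpr hT
  have hATpd : (A T).PosDef := hA T hTmem ▸ (hΛ T hTmem).add_sum_transpose_mul_self _ X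
  have hy : ∀ t ∈ Icc 1 T, y t ⬝ᵥ y t ≤ ybar ^ 2 := fun t ht => by
    rw [dotProduct_self_eq_sum_sq, hybar]
    exact (Real.sqrt_le_iff.mp (le_sup' (fun t => Real.sqrt (∑ i, y t i ^ 2)) ht)).2
  have hlearner := multivaw_cumulative_loss_le hT X y Λ A b hΛ hΛmono hA hb hy
  have hcompetitor := le_sum_mulVec_sub_dotProduct_self (Icc 1 T) X y (hA T hTmem) hATpd θc
  rw [← hb T le_rfl] at hcompetitor
  rw [hμA.sum_log_div_eq hμΛ hATpd hΛ1pos, sum_congr rfl fun t ht => by rw [hθ t ht]]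
  simp only [← dotProduct_self_eq_sum_sq]
  linarith

/-- **Regret bound for MultiVAW** (Theorem 1).  For time steps `t ∈ [T]`, features
`X t : ℝ^{n_t × d}`, responses `y t : ℝ^{n_t}`, symmetric regularizers
`0 ≺ Λ 1 ⪯ ⋯ ⪯ Λ T`, iterates `θ t = (A t)⁻¹ (b (t-1))` where
`A t = Λ t + ∑_{s≤t} Xₛᵀ Xₛ` and `b t = ∑_{s≤t} Xₛᵀ yₛ`, and
`ȳ = max_{t∈[T]} ‖y t‖₂`, the regret against any competitor `θc` is at most
`θcᵀ Λ_T θc + ȳ² ∑_i log (λ_i(A_T)/λ_i(Λ_1))`. -/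
theorem multivaw_regret_bound
    (T d : ℕ) (hT : 1 ≤ T)
    (n : ℕ → ℕ)
    (X : (t : ℕ) → Matrix (Fin (n t)) (Fin d) ℝ)
    (y : (t : ℕ) → Fin (n t) → ℝ)
    (Λ : ℕ → Matrix (Fin d) (Fin d) ℝ)
    (hΛsymm : ∀ t ∈ Icc 1 T, (Λ t).IsHermitian)
    (hΛ1pos : (Λ 1).PosDef)
    (hΛmono : ∀ t, 1 ≤ t → t + 1 ≤ T → (Λ (t + 1) - Λ t).PosSemidef)
    (A : ℕ → Matrix (Fin d) (Fin d) ℝ)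
    (hA : ∀ t ∈ Icc 1 T, A t = Λ t + ∑ s ∈ Icc 1 t, (X s)ᵀ * X s)
    (b : ℕ → (Fin d → ℝ))
    (hb : ∀ t ≤ T, b t = ∑ s ∈ Icc 1 t, (X s)ᵀ.mulVec (y s))
    (θ : ℕ → (Fin d → ℝ))
    (hθ : ∀ t ∈ Icc 1 T, θ t = (A t)⁻¹.mulVec (b (t - 1)))
    (ybar : ℝ)
    (hybar : ybar = (Icc 1 T).sup' (Finset.nonempty_Icc.mpr hT)
      (fun t => Real.sqrt (∑ i, (y t i) ^ 2)))
    (hAT : (A T).IsHermitian)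
    (μA μΛ : Fin d → ℝ)
    (hμA : IsDecrEigSeq hAT μA)
    (hμΛ : IsDecrEigSeq hΛ1pos.isHermitian μΛ)
    (θc : Fin d → ℝ) :
    (∑ t ∈ Icc 1 T, ∑ i, ((X t).mulVec (θ t) - y t) i ^ 2)
      - ∑ t ∈ Icc 1 T, ∑ i, ((X t).mulVec θc - y t) i ^ 2
    ≤ θc ⬝ᵥ (Λ T).mulVec θc + ybar ^ 2 * ∑ i, Real.log (μA i / μΛ i) :=
  multivaw_regret_bound_general T d hT n X y Λ hΛ1pos hΛmono A hA b hb θ hθ ybar hybar hAT μA μΛ hμA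
    hμΛ θc
end
end

section
/- Let T ∈ ℕ, and for each t = 1,…,T let X_t ∈ ℝ^{n_t×d} and y_t ∈ ℝ^{n_t}. Let λ > 0 and run MultiVAW with Λ_t = λ I_d for all t, i.e. θ_t = A_t^{-1} b_{t-1} with A_t = λ I_d + Σ_{s=1}^t X_sᵀX_s and b_t = Σ_{s=1}^t X_sᵀy_s. Set ȳ = max_{t∈[T]} ‖y_t‖₂ and X̄ = max_{t∈[T]} ‖X_t‖_F. Then for every θ ∈ ℝ^d, R_T(θ) ≤ λ‖θ‖₂² + d ȳ² log(1 + T X̄² / (d λ)). -/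
/-!
Vovk–Azoury–Warmuth analysis. With `A t` the regularised Gram matrix and `b t` the moment vector,
the potential `Φ t = ∑ s ≤ t, ‖y s‖² - b tᵀ (A t)⁻¹ b t` is the minimum of the ridge objective
`λ ‖θ‖² + ∑ s ≤ t, ‖X s θ - y s‖²`, so `Φ T` is at most the competitor's regularised loss. In each
round the learner's loss exceeds `Φ t - Φ (t - 1)` by at most `yᵀ X A⁻¹ Xᵀ y ≤ ‖y‖² tr (A⁻¹ Xᵀ X)`,
and `tr (A t⁻¹ (A t - A (t - 1))) ≤ log det A t - log det A (t - 1)` by concavity of `log det`.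
Telescoping leaves `ȳ² log (det A T / λ^d)`, and AM–GM on the eigenvalues, `det A ≤ (tr A / d)^d`,
turns it into the stated logarithm.
-/

open Matrix Finset

noncomputable section

section QuadraticForms

variable {k m : Type*} [Fintype k] [Fintype m]

lemma Matrix.trace_transpose_mul_self (A : Matrix m k ℝ) :
    (Aᵀ * A).trace = ∑ i, ∑ j, A i j ^ 2 := by
  simp only [trace, Matrix.diag, mul_apply, transpose_apply, sq]
  exact sum_comm

lemma Matrix.sum_sq_mulVec_sub (M : Matrix m k ℝ) (v : k → ℝ) (w : m → ℝ) :
    ∑ i, (M *ᵥ v - w) i ^ 2 = v ⬝ᵥ (Mᵀ * M) *ᵥ v - 2 * ((Mᵀ *ᵥ w) ⬝ᵥ v) + w ⬝ᵥ w := by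
  have hsq : ∑ i, (M *ᵥ v - w) i ^ 2 = (M *ᵥ v - w) ⬝ᵥ (M *ᵥ v - w) := by
    simp [dotProduct, sq]
  rw [hsq, ← mulVec_mulVec, dotProduct_transpose_mulVec, dotProduct_comm _ v,
    dotProduct_transpose_mulVec, sub_dotProduct, dotProduct_sub, dotProduct_sub,
    dotProduct_comm w (M *ᵥ v)]
  ring

lemma Matrix.posSemidef_transpose_mul_self_s1 (A : Matrix m k ℝ) : (Aᵀ * A).PosSemidef := by
  simpa [conjTranspose_eq_transpose_of_trivial] using posSemidef_conjTranspose_mul_self A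

open scoped MatrixOrder in
lemma Matrix.PosSemidef.dotProduct_mulVec_le_mul_trace {P : Matrix m m ℝ} (hP : P.PosSemidef)
    (x : m → ℝ) : x ⬝ᵥ P *ᵥ x ≤ (x ⬝ᵥ x) * P.trace := by
  classical
  obtain ⟨D, rfl⟩ := CStarAlgebra.nonneg_iff_eq_star_mul_self.mp hP.nonneg
  rw [star_eq_conjTranspose, conjTranspose_eq_transpose_of_trivial, trace_transpose_mul_self]
  have hrow : ∀ i, (D *ᵥ x) i ^ 2 ≤ (∑ j, D i j ^ 2) * (x ⬝ᵥ x) := fun i => by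
    simpa [mulVec, dotProduct, sq] using sum_mul_sq_le_sq_mul_sq univ (D i) x
  calc x ⬝ᵥ (Dᵀ * D) *ᵥ x = ∑ i, (D *ᵥ x) i ^ 2 := by
        rw [← mulVec_mulVec, dotProduct_transpose_mulVec]
        simp [dotProduct, sq]
    _ ≤ ∑ i, (∑ j, D i j ^ 2) * (x ⬝ᵥ x) := sum_le_sum fun i _ => hrow i
    _ = (x ⬝ᵥ x) * ∑ i, ∑ j, D i j ^ 2 := by rw [← sum_mul, mul_comm]

variable [DecidableEq k]

lemma Matrix.IsHermitian.mulVec_add_dotProduct_inv_mulVec {A : Matrix k k ℝ}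
    (hA : A.IsHermitian) (hdet : IsUnit A.det) (θ w : k → ℝ) :
    (A *ᵥ θ + w) ⬝ᵥ A⁻¹ *ᵥ (A *ᵥ θ + w) = θ ⬝ᵥ A *ᵥ θ + 2 * (w ⬝ᵥ θ) + w ⬝ᵥ A⁻¹ *ᵥ w := by
  have hT : Aᵀ = A := (isHermitian_iff_isSymm.mp hA).eq
  have hinv : A⁻¹ *ᵥ (A *ᵥ θ) = θ := by rw [mulVec_mulVec, nonsing_inv_mul _ hdet, one_mulVec]
  have hcross : (A *ᵥ θ) ⬝ᵥ A⁻¹ *ᵥ w = w ⬝ᵥ θ := by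
    rw [dotProduct_comm, ← dotProduct_transpose_mulVec, hT, mulVec_mulVec, mul_nonsing_inv _ hdet,
      one_mulVec, dotProduct_comm]
  rw [mulVec_add, hinv, add_dotProduct, dotProduct_add, dotProduct_add, hcross,
    dotProduct_comm (A *ᵥ θ), dotProduct_comm w θ]
  ring

lemma Matrix.PosDef.neg_dotProduct_inv_mulVec_le {Q : Matrix k k ℝ} (hQ : Q.PosDef)
    (b v : k → ℝ) : -(b ⬝ᵥ Q⁻¹ *ᵥ b) ≤ v ⬝ᵥ Q *ᵥ v - 2 * (b ⬝ᵥ v) := by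
  have hsq := hQ.isHermitian.mulVec_add_dotProduct_inv_mulVec hQ.det_pos.ne'.isUnit v (-b)
  have hnonneg := hQ.inv.posSemidef.dotProduct_mulVec_nonneg (Q *ᵥ v + -b)
  simp only [star_trivial, neg_dotProduct, mulVec_neg, dotProduct_neg, neg_neg] at hsq hnonneg
  linarith

lemma Matrix.PosDef.transpose_mulVec_dotProduct_inv_mulVec_le {A : Matrix k k ℝ}
    (hA : A.PosDef) (X : Matrix m k ℝ) {Y : m → ℝ} {c : ℝ} (hY : Y ⬝ᵥ Y ≤ c) :
    (Xᵀ *ᵥ Y) ⬝ᵥ A⁻¹ *ᵥ (Xᵀ *ᵥ Y) ≤ c * (A⁻¹ * (Xᵀ * X)).trace := by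
  have hP : (X * A⁻¹ * Xᵀ).PosSemidef := by
    simpa [conjTranspose_eq_transpose_of_trivial] using
      hA.inv.posSemidef.mul_mul_conjTranspose_same X
  have htr : (X * A⁻¹ * Xᵀ).trace = (A⁻¹ * (Xᵀ * X)).trace := by
    rw [trace_mul_comm, ← Matrix.mul_assoc, trace_mul_comm]
  calc (Xᵀ *ᵥ Y) ⬝ᵥ A⁻¹ *ᵥ (Xᵀ *ᵥ Y) = Y ⬝ᵥ (X * A⁻¹ * Xᵀ) *ᵥ Y := by
        rw [dotProduct_comm, dotProduct_transpose_mulVec]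
        simp only [mulVec_mulVec, Matrix.mul_assoc]
    _ ≤ (Y ⬝ᵥ Y) * (X * A⁻¹ * Xᵀ).trace := hP.dotProduct_mulVec_le_mul_trace Y
    _ ≤ c * (X * A⁻¹ * Xᵀ).trace := mul_le_mul_of_nonneg_right hY hP.trace_nonneg
    _ = c * (A⁻¹ * (Xᵀ * X)).trace := by rw [htr]

lemma Matrix.PosDef.sum_sq_mulVec_sub_le {V : Matrix k k ℝ} (hV : V.PosDef) (X : Matrix m k ℝ)
    {A : Matrix k k ℝ} (hA : A = V + Xᵀ * X) {θ β : k → ℝ} (hθ : A *ᵥ θ = β) (Y : m → ℝ) :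
    ∑ i, (X *ᵥ θ - Y) i ^ 2 ≤ Y ⬝ᵥ Y - (β + Xᵀ *ᵥ Y) ⬝ᵥ A⁻¹ *ᵥ (β + Xᵀ *ᵥ Y)
      + β ⬝ᵥ V⁻¹ *ᵥ β + (Xᵀ *ᵥ Y) ⬝ᵥ A⁻¹ *ᵥ (Xᵀ *ᵥ Y) := by
  have hApd : A.PosDef := hA ▸ hV.add_posSemidef (posSemidef_transpose_mul_self_s1 X)
  have hnew := hApd.isHermitian.mulVec_add_dotProduct_inv_mulVec
    hApd.det_pos.ne'.isUnit θ (Xᵀ *ᵥ Y)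
  -- with `A θ = V θ + XᵀX θ`, the term `β ⬝ᵥ V⁻¹ *ᵥ β` is `θᵀ V θ + 2 θᵀ XᵀX θ` plus a nonnegative term
  have hold := hV.isHermitian.mulVec_add_dotProduct_inv_mulVec
    hV.det_pos.ne'.isUnit θ ((Xᵀ * X) *ᵥ θ)
  have hrest := hV.inv.posSemidef.dotProduct_mulVec_nonneg ((Xᵀ * X) *ᵥ θ)
  rw [star_trivial] at hrest
  rw [← hθ, sum_sq_mulVec_sub, hnew, hA, add_mulVec, dotProduct_add, hold]
  rw [dotProduct_comm ((Xᵀ * X) *ᵥ θ) θ]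
  linarith

end QuadraticForms

section LogDet

variable {k : Type*} [Fintype k] [DecidableEq k]

lemma Matrix.PosDef.log_det_le_trace_sub_card_s1 {C : Matrix k k ℝ} (hC : C.PosDef) :
    Real.log C.det ≤ C.trace - Fintype.card k := by
  have hμ := hC.eigenvalues_pos
  rw [hC.isHermitian.det_eq_prod_eigenvalues, hC.isHermitian.trace_eq_sum_eigenvalues]
  simp only [RCLike.ofReal_real_eq_id, id]
  calc Real.log (∏ i, hC.isHermitian.eigenvalues i)
      = ∑ i, Real.log (hC.isHermitian.eigenvalues i) := Real.log_prod fun i _ => (hμ i).ne'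
    _ ≤ ∑ i, (hC.isHermitian.eigenvalues i - 1) :=
        sum_le_sum fun i _ => Real.log_le_sub_one_of_pos (hμ i)
    _ = ∑ i, hC.isHermitian.eigenvalues i - Fintype.card k := by simp [sum_sub_distrib]

open scoped MatrixOrder in
lemma Matrix.PosDef.log_det_sub_log_det_le_trace_inv_mul_sub_card {A B : Matrix k k ℝ}
    (hA : A.PosDef) (hB : B.PosDef) :
    Real.log B.det - Real.log A.det ≤ (A⁻¹ * B).trace - Fintype.card k := by
  obtain ⟨D, rfl⟩ := CStarAlgebra.nonneg_iff_eq_star_mul_self.mp hB.posSemidef.nonneg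
  rw [star_eq_conjTranspose] at hB ⊢
  have hdet : (D * A⁻¹ * Dᴴ).det = (Dᴴ * D).det / A.det := by
    rw [det_mul, det_mul, det_mul, det_nonsing_inv, Ring.inverse_eq_inv', div_eq_mul_inv]
    ring
  have hC : (D * A⁻¹ * Dᴴ).PosDef := by
    refine (hA.inv.posSemidef.mul_mul_conjTranspose_same D).posDef_iff_det_ne_zero.mpr ?_
    rw [hdet]
    exact div_ne_zero hB.det_pos.ne' hA.det_pos.ne'
  have htr : (D * A⁻¹ * Dᴴ).trace = (A⁻¹ * (Dᴴ * D)).trace := by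
    rw [trace_mul_comm, ← Matrix.mul_assoc, trace_mul_comm]
  have := hC.log_det_le_trace_sub_card_s1
  rwa [hdet, Real.log_div hB.det_pos.ne' hA.det_pos.ne', htr] at this

lemma Matrix.PosDef.trace_inv_add_mul_le_log_det_sub {B M : Matrix k k ℝ} (hB : B.PosDef)
    (hM : M.PosSemidef) :
    ((B + M)⁻¹ * M).trace ≤ Real.log (B + M).det - Real.log B.det := by
  have hA := hB.add_posSemidef hM
  have hsplit : (B + M)⁻¹ * M = 1 - (B + M)⁻¹ * B := by
    rw [eq_sub_iff_add_eq, ← Matrix.mul_add, add_comm M B,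
      nonsing_inv_mul _ hA.det_pos.ne'.isUnit]
  have := hA.log_det_sub_log_det_le_trace_inv_mul_sub_card hB
  rw [hsplit, trace_sub, trace_one]
  linarith

lemma Matrix.PosDef.log_det_le_card_mul_log_trace_div_card {B : Matrix k k ℝ} (hB : B.PosDef) :
    Real.log B.det ≤ Fintype.card k * Real.log (B.trace / Fintype.card k) := by
  rcases isEmpty_or_nonempty k with hk | hk
  · simp
  have hd : (0 : ℝ) < Fintype.card k := Nat.cast_pos.mpr Fintype.card_pos
  have hc : 0 < B.trace / Fintype.card k := div_pos hB.trace_pos hd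
  have htr : ((B.trace / Fintype.card k)⁻¹ • B).trace = Fintype.card k := by
    rw [trace_smul, smul_eq_mul, inv_div, div_mul_cancel₀ _ hB.trace_pos.ne']
  have := (hB.smul (inv_pos.mpr hc)).log_det_le_trace_sub_card_s1
  rw [det_smul, htr, sub_self, Real.log_mul (pow_ne_zero _ (inv_pos.mpr hc).ne') hB.det_pos.ne',
    Real.log_pow, Real.log_inv] at this
  linarith

end LogDet

namespace MultiVAW

variable {k : Type*} {m : ℕ → Type*} [∀ t, Fintype (m t)]
  (lam : ℝ) (X : ∀ t, Matrix (m t) k ℝ) (y : ∀ t, m t → ℝ)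

def moment (t : ℕ) : k → ℝ := ∑ s ∈ Icc 1 t, (X s)ᵀ *ᵥ y s

lemma moment_succ (t : ℕ) : moment X y (t + 1) = moment X y t + (X (t + 1))ᵀ *ᵥ y (t + 1) :=
  sum_Icc_succ_top (by omega) _

variable [DecidableEq k]

def gram (t : ℕ) : Matrix k k ℝ := lam • 1 + ∑ s ∈ Icc 1 t, (X s)ᵀ * X s

lemma gram_zero : gram lam X 0 = lam • (1 : Matrix k k ℝ) := by simp [gram]

lemma gram_succ (t : ℕ) : gram lam X (t + 1) = gram lam X t + (X (t + 1))ᵀ * X (t + 1) := by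
  rw [gram, gram, sum_Icc_succ_top (by omega), add_assoc]

variable [Fintype k]

def iterate (t : ℕ) : k → ℝ := (gram lam X t)⁻¹ *ᵥ moment X y (t - 1)

def loss (t : ℕ) (θ : k → ℝ) : ℝ := ∑ i, (X t *ᵥ θ - y t) i ^ 2

def potential (t : ℕ) : ℝ :=
  ∑ s ∈ Icc 1 t, y s ⬝ᵥ y s - moment X y t ⬝ᵥ (gram lam X t)⁻¹ *ᵥ moment X y t

variable {lam}

lemma posDef_gram (hlam : 0 < lam) (t : ℕ) : (gram lam X t).PosDef :=
  (PosDef.one.smul hlam).add_posSemidef <|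
    posSemidef_sum _ fun s _ => posSemidef_transpose_mul_self_s1 (X s)

lemma loss_iterate_succ_le (hlam : 0 < lam) {t : ℕ} {c : ℝ} (hy : y (t + 1) ⬝ᵥ y (t + 1) ≤ c) :
    loss X y (t + 1) (iterate lam X y (t + 1)) ≤ potential lam X y (t + 1) - potential lam X y t
      + c * (Real.log (gram lam X (t + 1)).det - Real.log (gram lam X t).det) := by
  have hV := posDef_gram X hlam t
  have hA := posDef_gram X hlam (t + 1)
  have hθ : gram lam X (t + 1) *ᵥ iterate lam X y (t + 1) = moment X y t := by
    rw [iterate, Nat.add_sub_cancel, mulVec_mulVec,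
      mul_nonsing_inv _ hA.det_pos.ne'.isUnit, one_mulVec]
  have hstep := hV.sum_sq_mulVec_sub_le (X (t + 1)) (gram_succ lam X t) hθ (y (t + 1))
  have hquad := hA.transpose_mulVec_dotProduct_inv_mulVec_le (X (t + 1)) hy
  have hlogdet := hV.trace_inv_add_mul_le_log_det_sub (posSemidef_transpose_mul_self_s1 (X (t + 1)))
  rw [← gram_succ] at hlogdet
  have hc : 0 ≤ c := (dotProduct_star_self_nonneg (y (t + 1))).trans hy
  have hpot : potential lam X y (t + 1) - potential lam X y t = y (t + 1) ⬝ᵥ y (t + 1)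
      - (moment X y t + (X (t + 1))ᵀ *ᵥ y (t + 1)) ⬝ᵥ (gram lam X (t + 1))⁻¹ *ᵥ
          (moment X y t + (X (t + 1))ᵀ *ᵥ y (t + 1))
      + moment X y t ⬝ᵥ (gram lam X t)⁻¹ *ᵥ moment X y t := by
    rw [potential, potential, sum_Icc_succ_top (by omega), moment_succ]
    ring
  rw [loss, hpot]
  linarith [mul_le_mul_of_nonneg_left hlogdet hc]

theorem sum_loss_iterate_le (hlam : 0 < lam) {c : ℝ} (T : ℕ)
    (hy : ∀ t ∈ Icc 1 T, y t ⬝ᵥ y t ≤ c) :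
    ∑ t ∈ Icc 1 T, loss X y t (iterate lam X y t) ≤ potential lam X y T
      + c * (Real.log (gram lam X T).det - Real.log (gram lam X 0).det) := by
  induction T with
  | zero => simp [potential, moment]
  | succ T ih =>
    rw [sum_Icc_succ_top (by omega)]
    have hlast := loss_iterate_succ_le X y hlam (hy (T + 1) (by simp))
    have hprev := ih fun t ht => hy t (by simp only [mem_Icc] at ht ⊢; omega)
    linarith

theorem potential_le_add_sum_loss (hlam : 0 < lam) (T : ℕ) (θ : k → ℝ) :
    potential lam X y T ≤ lam * (θ ⬝ᵥ θ) + ∑ t ∈ Icc 1 T, loss X y t θ := by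
  have hmin := (posDef_gram X hlam T).neg_dotProduct_inv_mulVec_le (moment X y T) θ
  have hsum : ∑ t ∈ Icc 1 T, loss X y t θ = θ ⬝ᵥ (∑ t ∈ Icc 1 T, (X t)ᵀ * X t) *ᵥ θ
      - 2 * (moment X y T ⬝ᵥ θ) + ∑ t ∈ Icc 1 T, y t ⬝ᵥ y t := by
    simp only [loss, sum_sq_mulVec_sub, sum_add_distrib, sum_sub_distrib, ← mul_sum, sum_mulVec,
      dotProduct_sum, moment, sum_dotProduct]
  have hgram : θ ⬝ᵥ gram lam X T *ᵥ θ
      = lam * (θ ⬝ᵥ θ) + θ ⬝ᵥ (∑ t ∈ Icc 1 T, (X t)ᵀ * X t) *ᵥ θ := by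
    rw [gram, add_mulVec, smul_mulVec, one_mulVec, dotProduct_add, dotProduct_smul, smul_eq_mul]
  rw [potential, hsum]
  linarith

lemma trace_gram (T : ℕ) :
    (gram lam X T).trace = Fintype.card k * lam + ∑ t ∈ Icc 1 T, ∑ i, ∑ j, X t i j ^ 2 := by
  simp only [gram, trace_add, trace_smul, trace_one, trace_sum, trace_transpose_mul_self,
    smul_eq_mul, mul_comm]

theorem log_det_gram_sub_le (hlam : 0 < lam) (T : ℕ) {B : ℝ}
    (hX : ∀ t ∈ Icc 1 T, ∑ i, ∑ j, X t i j ^ 2 ≤ B) :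
    Real.log (gram lam X T).det - Real.log (gram lam X 0).det
      ≤ Fintype.card k * Real.log (1 + T * B / (Fintype.card k * lam)) := by
  have hdet := (posDef_gram X hlam T).log_det_le_card_mul_log_trace_div_card
  rw [gram_zero, det_smul, det_one, mul_one, Real.log_pow]
  rcases (Fintype.card k).eq_zero_or_pos with hd | hd
  · simp_all
  have : Nonempty k := Fintype.card_pos_iff.mp hd
  have htr_pos : 0 < (gram lam X T).trace := (posDef_gram X hlam T).trace_pos
  have hdl : (0 : ℝ) < Fintype.card k * lam := by positivity
  have htr : (gram lam X T).trace ≤ Fintype.card k * lam + T * B := by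
    rw [trace_gram]
    simpa using sum_le_sum hX
  calc Real.log (gram lam X T).det - Fintype.card k * Real.log lam
      ≤ Fintype.card k * (Real.log ((gram lam X T).trace / Fintype.card k) - Real.log lam) := by
        rw [mul_sub]; linarith
    _ = Fintype.card k * Real.log ((gram lam X T).trace / (Fintype.card k * lam)) := by
        rw [← Real.log_div (by positivity) hlam.ne', div_div]
    _ ≤ Fintype.card k * Real.log (1 + T * B / (Fintype.card k * lam)) := by
        gcongr
        rw [one_add_div hdl.ne']
        gcongr

end MultiVAW

/-- **Regret bound for MultiVAW with standard regularization `Λ_t = λ I_d`**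
(Corollary 2).  With `A t = λ I_d + ∑_{s≤t} Xₛᵀ Xₛ`, `b t = ∑_{s≤t} Xₛᵀ yₛ`,
iterates `θ t = (A t)⁻¹ (b (t-1))`, `ȳ = max_{t∈[T]} ‖y t‖₂` and
`X̄ = max_{t∈[T]} ‖X t‖_F`, the regret against any `θc ∈ ℝ^d` is at most
`λ ‖θc‖₂² + d ȳ² log (1 + T X̄² / (d λ))`. -/
theorem multivaw_standard_reg_regret_bound
    (T d : ℕ) (hT : 1 ≤ T)
    (n : ℕ → ℕ)
    (X : (t : ℕ) → Matrix (Fin (n t)) (Fin d) ℝ)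
    (y : (t : ℕ) → Fin (n t) → ℝ)
    (lam : ℝ) (hlam : 0 < lam)
    (A : ℕ → Matrix (Fin d) (Fin d) ℝ)
    (hA : ∀ t ∈ Icc 1 T,
      A t = lam • (1 : Matrix (Fin d) (Fin d) ℝ) + ∑ s ∈ Icc 1 t, (X s)ᵀ * X s)
    (b : ℕ → (Fin d → ℝ))
    (hb : ∀ t ≤ T, b t = ∑ s ∈ Icc 1 t, (X s)ᵀ.mulVec (y s))
    (θ : ℕ → (Fin d → ℝ))
    (hθ : ∀ t ∈ Icc 1 T, θ t = (A t)⁻¹.mulVec (b (t - 1)))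
    (ybar Xbar : ℝ)
    (hybar : ybar = (Icc 1 T).sup' (Finset.nonempty_Icc.mpr hT)
      (fun t => Real.sqrt (∑ i, (y t i) ^ 2)))
    (hXbar : Xbar = (Icc 1 T).sup' (Finset.nonempty_Icc.mpr hT)
      (fun t => Real.sqrt (∑ i, ∑ j, (X t i j) ^ 2)))
    (θc : Fin d → ℝ) :
    (∑ t ∈ Icc 1 T, ∑ i, ((X t).mulVec (θ t) - y t) i ^ 2)
      - ∑ t ∈ Icc 1 T, ∑ i, ((X t).mulVec θc - y t) i ^ 2
    ≤ lam * ∑ i, (θc i) ^ 2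
        + (d : ℝ) * ybar ^ 2 * Real.log (1 + (T : ℝ) * Xbar ^ 2 / ((d : ℝ) * lam)) := by
  have hiter : ∀ t ∈ Icc 1 T, θ t = MultiVAW.iterate lam X y t := fun t ht => by
    rw [hθ t ht, hA t ht, hb (t - 1) (by simp only [mem_Icc] at ht; omega)]
    rfl
  have hy : ∀ t ∈ Icc 1 T, y t ⬝ᵥ y t ≤ ybar ^ 2 := fun t ht => by
    have hsup := (Real.sqrt_le_iff.mp (hybar ▸ le_sup' (fun t => √(∑ i, y t i ^ 2)) ht)).2
    simpa [dotProduct, sq] using hsup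
  have hX : ∀ t ∈ Icc 1 T, ∑ i, ∑ j, X t i j ^ 2 ≤ Xbar ^ 2 := fun t ht =>
    (Real.sqrt_le_iff.mp (hXbar ▸ le_sup' (fun t => √(∑ i, ∑ j, X t i j ^ 2)) ht)).2
  have hlearner := MultiVAW.sum_loss_iterate_le X y hlam T hy
  have hcompetitor := MultiVAW.potential_le_add_sum_loss X y hlam T θc
  have hlogdet :=
    mul_le_mul_of_nonneg_left (MultiVAW.log_det_gram_sub_le X hlam T hX) (sq_nonneg ybar)
  rw [Fintype.card_fin] at hlogdet
  have hnorm : ∑ i, θc i ^ 2 = θc ⬝ᵥ θc := by simp [dotProduct, sq]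
  change ∑ t ∈ Icc 1 T, MultiVAW.loss X y t (θ t) - ∑ t ∈ Icc 1 T, MultiVAW.loss X y t θc ≤ _
  rw [sum_congr rfl fun t ht => congrArg (MultiVAW.loss X y t) (hiter t ht), hnorm]
  linarith
end
end

section
/- Let A, B ∈ ℝ^{d×d} be symmetric matrices with A ⪰ B ≻ 0 (i.e. B is positive definite and A − B is positive semidefinite). Then tr(A^{-1}(A − B)) ≤ Σ_{i=1}^d log( λ_i(A) / λ_i(B) ), where λ_i(M) denotes the i-th largest eigenvalue of the symmetric matrix M. -/
/-!
Since `A ⪰ B ≻ 0`, `A` is positive definite; let `S = A^{-1/2}`. Then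
`tr(A⁻¹(A − B)) = tr(1 − SBS) = ∑ᵢ (1 − λᵢ)` over the eigenvalues `λᵢ > 0` of `SBS`, and
`1 − λ ≤ −log λ` bounds this by `−log det(SBS) = log det A − log det B`. Both determinants are
products of eigenvalues, in whatever order they are listed.
-/

open Matrix Finset

noncomputable section

namespace Matrix

variable {n : Type*} [Fintype n] [DecidableEq n]

open scoped ComplexOrder MatrixOrder in
theorem PosDef.exists_posDef_mul_self_eq {𝕜 : Type*} [RCLike 𝕜] {A : Matrix n n 𝕜}
    (hA : A.PosDef) : ∃ S : Matrix n n 𝕜, S.PosDef ∧ S * S = A :=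
  ⟨CFC.sqrt A, (IsStrictlyPositive.sqrt A hA.isStrictlyPositive).posDef,
    CFC.sqrt_mul_sqrt_self A hA.posSemidef.nonneg⟩

theorem PosDef.log_det_eq_sum_log_eigenvalues {A : Matrix n n ℝ} (hA : A.PosDef) :
    Real.log A.det = ∑ i, Real.log (hA.isHermitian.eigenvalues i) := by
  rw [hA.isHermitian.det_eq_prod_eigenvalues]
  exact Real.log_prod fun i _ => (hA.eigenvalues_pos i).ne'

theorem PosDef.trace_one_sub_le_neg_log_det {A : Matrix n n ℝ} (hA : A.PosDef) :
    (1 - A).trace ≤ -Real.log A.det := by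
  rw [trace_sub, trace_one, hA.isHermitian.trace_eq_sum_eigenvalues,
    hA.log_det_eq_sum_log_eigenvalues, ← sum_neg_distrib, Fintype.card_eq_sum_ones, Nat.cast_sum,
    ← sum_sub_distrib]
  refine sum_le_sum fun i _ => ?_
  have := Real.log_le_sub_one_of_pos (hA.eigenvalues_pos i)
  simp only [RCLike.ofReal_real_eq_id, id, Nat.cast_one]
  linarith

theorem PosDef.trace_inv_mul_sub_le_log_det_sub_log_det {A B : Matrix n n ℝ}
    (hA : A.PosDef) (hB : B.PosDef) :
    (A⁻¹ * (A - B)).trace ≤ Real.log A.det - Real.log B.det := by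
  obtain ⟨S, hS, hSS⟩ := hA.inv.exists_posDef_mul_self_eq
  have hC : (S * B * S).PosDef := by
    simpa only [hS.isHermitian.eq] using
      hB.conjTranspose_mul_mul_same (mulVec_injective_iff_isUnit.mpr hS.isUnit)
  have hdetC : (S * B * S).det = A.det⁻¹ * B.det := by
    rw [det_mul, det_mul, mul_right_comm, ← det_mul, hSS, det_nonsing_inv, Ring.inverse_eq_inv]
  have htrace : (A⁻¹ * (A - B)).trace = (1 - S * B * S).trace := by
    rw [mul_sub, nonsing_inv_mul A hA.det_pos.ne'.isUnit, trace_sub, trace_sub, ← hSS,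
      Matrix.mul_assoc, trace_mul_comm S, Matrix.mul_assoc]
  calc (A⁻¹ * (A - B)).trace ≤ -Real.log (S * B * S).det :=
        htrace ▸ hC.trace_one_sub_le_neg_log_det
    _ = Real.log A.det - Real.log B.det := by
      rw [hdetC, Real.log_mul (inv_ne_zero hA.det_pos.ne') hB.det_pos.ne', Real.log_inv]
      ring

end Matrix

namespace IsDecrEigSeq

variable {d : ℕ} {A : Matrix (Fin d) (Fin d) ℝ} {μ : Fin d → ℝ}

theorem pos_s2 (hA : A.PosDef) (hμ : IsDecrEigSeq hA.isHermitian μ) (i : Fin d) : 0 < μ i := by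
  obtain ⟨-, σ, rfl⟩ := hμ
  exact hA.eigenvalues_pos (σ i)

theorem sum_log_eq_log_det_s2 (hA : A.PosDef) (hμ : IsDecrEigSeq hA.isHermitian μ) :
    ∑ i, Real.log (μ i) = Real.log A.det := by
  obtain ⟨-, σ, rfl⟩ := hμ
  rw [hA.log_det_eq_sum_log_eigenvalues]
  exact Equiv.sum_comp σ fun i => Real.log (hA.isHermitian.eigenvalues i)

end IsDecrEigSeq

/-- **Lemma 12 of Hazan et al.**: for symmetric matrices `A ⪰ B ≻ 0`,
`tr(A⁻¹ (A − B)) ≤ ∑_i log (λ_i(A) / λ_i(B))`, with eigenvalues in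
decreasing order. -/
theorem trace_inv_mul_sub_le_sum_log_eig_ratio
    (d : ℕ) (A B : Matrix (Fin d) (Fin d) ℝ)
    (hA : A.IsHermitian) (hB : B.PosDef) (hAB : (A - B).PosSemidef)
    (μA μB : Fin d → ℝ)
    (hμA : IsDecrEigSeq hA μA)
    (hμB : IsDecrEigSeq hB.isHermitian μB) :
    (A⁻¹ * (A - B)).trace ≤ ∑ i, Real.log (μA i / μB i) := by
  have hApd : A.PosDef := by simpa using PosDef.posSemidef_add hAB hB
  calc (A⁻¹ * (A - B)).trace ≤ Real.log A.det - Real.log B.det :=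
        hApd.trace_inv_mul_sub_le_log_det_sub_log_det hB
    _ = ∑ i, (Real.log (μA i) - Real.log (μB i)) := by
        rw [sum_sub_distrib, hμA.sum_log_eq_log_det_s2 hApd, hμB.sum_log_eq_log_det_s2 hB]
    _ = ∑ i, Real.log (μA i / μB i) :=
        sum_congr rfl fun i _ => (Real.log_div (hμA.pos_s2 hApd i).ne' (hμB.pos_s2 hB i).ne').symm
end
end

section
/- Let V ∈ ℝ^{n×d} have linearly independent columns (so VᵀV is invertible), let W_s ∈ ℝ^{m×k_s} and Y_s ∈ ℝ^{n×k_s} for s = 1,…,T, and let Λ̃ ∈ ℝ^{m×m} be symmetric positive definite. Set X_s = W_sᵀ ⊗ V, Λ_t = Λ̃ ⊗ (VᵀV), A_t = Λ_t + Σ_{s=1}^t X_sᵀX_s and b_{t-1} = Σ_{s=1}^{t-1} X_sᵀ vec(Y_s). Then A_t is invertible and the MultiVAW iterate θ_t = A_t^{-1} b_{t-1} satisfies θ_t = vec(Θ_t) with Θ_t = (VᵀV)^{-1} Vᵀ ( Σ_{s=1}^{t-1} Y_s W_sᵀ ) ( Λ̃ + Σ_{s=1}^t W_s W_sᵀ )^{-1}.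 -/
open Matrix Finset
open scoped Kronecker

noncomputable section

/-- Column-stacking vectorization of a matrix: `vec M (j, i) = M i j`. -/
def vec {a b : ℕ} (M : Matrix (Fin a) (Fin b) ℝ) : Fin b × Fin a → ℝ :=
  fun p => M p.2 p.1

/-! Since `(Wᵀ ⊗ V)ᵀ (Wᵀ ⊗ V) = W Wᵀ ⊗ VᵀV`, the matrix `A_t` factors as `S ⊗ G` with
`S = Λ̃ + ∑ Wₛ Wₛᵀ` and `G = VᵀV`, both positive definite, hence invertible; likewise
`(Wᵀ ⊗ V)ᵀ vec Y = vec (Vᵀ Y Wᵀ)`. Then `A_t⁻¹ = S⁻¹ ⊗ G⁻¹`, and `(B ⊗ A) vec M = vec (A M Bᵀ)`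
together with the symmetry of `S` gives the closed form. -/

theorem vec_eq_matrixVec {a b : ℕ} (M : Matrix (Fin a) (Fin b) ℝ) : _root_.vec M = M.vec := rfl

namespace Matrix

variable {ι l m n p q R K : Type*}

theorem sum_kronecker [CommSemiring R] (s : Finset ι) (A : ι → Matrix l m R) (B : Matrix p q R) :
    (∑ i ∈ s, A i) ⊗ₖ B = ∑ i ∈ s, A i ⊗ₖ B :=
  map_sum ((kroneckerBilinear (R := R) (α := R)).flip B) A s

theorem transpose_kronecker_mul_self [CommSemiring R] [Fintype n] [Fintype p]
    (W : Matrix m p R) (V : Matrix n q R) :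
    (Wᵀ ⊗ₖ V)ᵀ * (Wᵀ ⊗ₖ V) = (W * Wᵀ) ⊗ₖ (Vᵀ * V) := by
  rw [← kroneckerMap_transpose, transpose_transpose, ← mul_kronecker_mul]

theorem transpose_kronecker_mulVec_vec [CommSemiring R] [Fintype n] [Fintype p]
    (W : Matrix m p R) (V : Matrix n q R) (Y : Matrix n p R) :
    (Wᵀ ⊗ₖ V)ᵀ *ᵥ Y.vec = (Vᵀ * Y * Wᵀ).vec := by
  rw [← kroneckerMap_transpose, transpose_transpose, kronecker_mulVec_vec]

section family

variable {κ : ι → Type*} [∀ i, Fintype (κ i)]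

theorem kronecker_add_sum_transpose_kronecker_mul_self [CommSemiring R] [Fintype n]
    (Λ : Matrix m m R) (V : Matrix n q R) (s : Finset ι) (W : (i : ι) → Matrix m (κ i) R) :
    Λ ⊗ₖ (Vᵀ * V) + ∑ i ∈ s, ((W i)ᵀ ⊗ₖ V)ᵀ * ((W i)ᵀ ⊗ₖ V)
      = (Λ + ∑ i ∈ s, W i * (W i)ᵀ) ⊗ₖ (Vᵀ * V) := by
  simp only [transpose_kronecker_mul_self, add_kronecker, sum_kronecker]

theorem sum_transpose_kronecker_mulVec_vec [CommSemiring R] [Fintype n]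
    (V : Matrix n q R) (s : Finset ι) (W : (i : ι) → Matrix m (κ i) R)
    (Y : (i : ι) → Matrix n (κ i) R) :
    ∑ i ∈ s, ((W i)ᵀ ⊗ₖ V)ᵀ *ᵥ (Y i).vec = (Vᵀ * ∑ i ∈ s, Y i * (W i)ᵀ).vec := by
  simp only [transpose_kronecker_mulVec_vec, Matrix.mul_sum, Matrix.mul_assoc, vec_sum]

theorem PosDef.add_sum_mul_transpose [Fintype m] {Λ : Matrix m m ℝ} (hΛ : Λ.PosDef)
    (s : Finset ι) (W : (i : ι) → Matrix m (κ i) ℝ) :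
    (Λ + ∑ i ∈ s, W i * (W i)ᵀ).PosDef :=
  hΛ.add_posSemidef <| posSemidef_sum s fun i _ => by
    simpa using posSemidef_self_mul_conjTranspose (W i)

end family

theorem PosDef.transpose_mul_self_of_linearIndependent_col [Fintype m] [Fintype n] (V : Matrix n m ℝ)
    (hV : LinearIndependent ℝ V.col) : (Vᵀ * V).PosDef := by
  simpa using PosDef.conjTranspose_mul_self V (mulVec_injective_iff.mpr hV)

theorem inv_kronecker_mulVec_vec [Field K] [Fintype m] [DecidableEq m] [Fintype n]
    [DecidableEq n] {S : Matrix m m K} (hS : S.IsSymm) (G : Matrix n n K) (M : Matrix n m K) :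
    (S ⊗ₖ G)⁻¹ *ᵥ M.vec = (G⁻¹ * M * S⁻¹).vec := by
  rw [inv_kronecker, kronecker_mulVec_vec, transpose_nonsing_inv, hS.eq]

end Matrix

theorem multivaw_kronecker_closed_form_general
    (n d m : ℕ) (k : ℕ → ℕ)
    (V : Matrix (Fin n) (Fin d) ℝ)
    (hV : LinearIndependent ℝ (fun j : Fin d => fun i : Fin n => V i j))
    (W : (s : ℕ) → Matrix (Fin m) (Fin (k s)) ℝ)
    (Y : (s : ℕ) → Matrix (Fin n) (Fin (k s)) ℝ)
    (Λt : Matrix (Fin m) (Fin m) ℝ) (hΛt : Λt.PosDef)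
    (X : (s : ℕ) → Matrix (Fin (k s) × Fin n) (Fin m × Fin d) ℝ)
    (hX : ∀ s, X s = (W s)ᵀ ⊗ₖ V)
    (t : ℕ)
    (A : Matrix (Fin m × Fin d) (Fin m × Fin d) ℝ)
    (hA : A = Λt ⊗ₖ (Vᵀ * V) + ∑ s ∈ Icc 1 t, (X s)ᵀ * X s)
    (b : Fin m × Fin d → ℝ)
    (hb : b = ∑ s ∈ Icc 1 (t - 1), (X s)ᵀ.mulVec (_root_.vec (Y s))) :
    IsUnit A.det
    ∧ A⁻¹.mulVec b
      = _root_.vec ((Vᵀ * V)⁻¹ * Vᵀ * (∑ s ∈ Icc 1 (t - 1), Y s * (W s)ᵀ)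
          * (Λt + ∑ s ∈ Icc 1 t, W s * (W s)ᵀ)⁻¹) := by
  obtain rfl : X = fun s => (W s)ᵀ ⊗ₖ V := funext hX
  have hG : (Vᵀ * V).PosDef := PosDef.transpose_mul_self_of_linearIndependent_col V hV
  have hS := hΛt.add_sum_mul_transpose (Icc 1 t) W
  rw [kronecker_add_sum_transpose_kronecker_mul_self] at hA
  subst hA hb
  refine ⟨(isUnit_iff_isUnit_det _).mp (hS.kronecker hG).isUnit, ?_⟩
  simp only [vec_eq_matrixVec, sum_transpose_kronecker_mulVec_vec,
    inv_kronecker_mulVec_vec (isHermitian_iff_isSymm.mp hS.isHermitian), Matrix.mul_assoc]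

/-- **Closed form of MultiVAW under Kronecker regularization** (Proposition 3).
With `V` having linearly independent columns, `X_s = Wₛᵀ ⊗ V`,
`Λ_t = Λ̃ ⊗ (VᵀV)`, `A_t = Λ_t + ∑_{s=1}^t XₛᵀXₛ` and
`b_{t-1} = ∑_{s=1}^{t-1} Xₛᵀ vec(Yₛ)`, the matrix `A_t` is invertible and the
MultiVAW iterate `θ_t = A_t⁻¹ b_{t-1}` satisfies `θ_t = vec(Θ_t)` with
`Θ_t = (VᵀV)⁻¹ Vᵀ (∑_{s<t} Yₛ Wₛᵀ) (Λ̃ + ∑_{s≤t} Wₛ Wₛᵀ)⁻¹`. -/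
theorem multivaw_kronecker_closed_form
    (T n d m : ℕ) (k : ℕ → ℕ)
    (V : Matrix (Fin n) (Fin d) ℝ)
    (hV : LinearIndependent ℝ (fun j : Fin d => fun i : Fin n => V i j))
    (W : (s : ℕ) → Matrix (Fin m) (Fin (k s)) ℝ)
    (Y : (s : ℕ) → Matrix (Fin n) (Fin (k s)) ℝ)
    (Λt : Matrix (Fin m) (Fin m) ℝ) (hΛt : Λt.PosDef)
    (X : (s : ℕ) → Matrix (Fin (k s) × Fin n) (Fin m × Fin d) ℝ)
    (hX : ∀ s, X s = (W s)ᵀ ⊗ₖ V)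
    (t : ℕ) (ht : t ∈ Icc 1 T)
    (A : Matrix (Fin m × Fin d) (Fin m × Fin d) ℝ)
    (hA : A = Λt ⊗ₖ (Vᵀ * V) + ∑ s ∈ Icc 1 t, (X s)ᵀ * X s)
    (b : Fin m × Fin d → ℝ)
    (hb : b = ∑ s ∈ Icc 1 (t - 1), (X s)ᵀ.mulVec (_root_.vec (Y s))) :
    IsUnit A.det
    ∧ A⁻¹.mulVec b
      = _root_.vec ((Vᵀ * V)⁻¹ * Vᵀ * (∑ s ∈ Icc 1 (t - 1), Y s * (W s)ᵀ)
          * (Λt + ∑ s ∈ Icc 1 t, W s * (W s)ᵀ)⁻¹) :=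
  multivaw_kronecker_closed_form_general n d m k V hV W Y Λt hΛt X hX t A hA b hb
end
end

section
/- Let S ∈ ℝ^{n×d} have linearly independent columns, let x_1,…,x_T ∈ ℝ^m and y_1,…,y_T ∈ ℝ^n, and let λ > 0. Set X_t = x_tᵀ ⊗ S ∈ ℝ^{n×dm}, Λ_t = λ I_m ⊗ (SᵀS), A_t = Λ_t + Σ_{s=1}^t X_sᵀX_s and b_{t-1} = Σ_{s=1}^{t-1} X_sᵀ y_s, and let θ_t = A_t^{-1} b_{t-1} be the MultiVAW-OHF iterate. Then for every t ∈ [T], the prediction X_t θ_t equals the MetaVAW prediction: X_t θ_t = S (SᵀS)^{-1} Sᵀ ( Σ_{s=1}^{t-1} y_s x_sᵀ ) ( λ I_m + Σ_{s=1}^t x_s x_sᵀ )^{-1} x_t. -/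
open Matrix Finset
open scoped Kronecker

noncomputable section

private lemma mulVec_finset_sum {n m : Type*} [Fintype m]
    (A : Matrix n m ℝ) (F : Finset ℕ) (v : ℕ → m → ℝ) :
    A.mulVec (∑ s ∈ F, v s) = ∑ s ∈ F, A.mulVec (v s) := by
  ext i
  simp only [Matrix.mulVec, dotProduct, Finset.sum_apply, Finset.mul_sum]
  exact Finset.sum_comm

private lemma finset_sum_mulVec {n m : Type*} [Fintype m]
    (F : Finset ℕ) (B : ℕ → Matrix n m ℝ) (v : m → ℝ) :
    (∑ s ∈ F, B s).mulVec v = ∑ s ∈ F, (B s).mulVec v := by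
  ext i
  simp only [Matrix.mulVec, dotProduct, Matrix.sum_apply, Finset.sum_apply, Finset.sum_mul]
  exact Finset.sum_comm

private lemma vecMulVec_mulVec' {n m : Type*} [Fintype m] (w : n → ℝ) (v u : m → ℝ) :
    (vecMulVec w v).mulVec u = (v ⬝ᵥ u) • w := by
  ext i
  simp only [Matrix.mulVec, dotProduct, vecMulVec_apply, Pi.smul_apply, smul_eq_mul,
    Finset.sum_mul]
  exact Finset.sum_congr rfl fun j _ => by ring

private lemma sandwich {n d m : ℕ} (S : Matrix (Fin n) (Fin d) ℝ)
    (u w : Fin m → ℝ) (Q : Matrix (Fin m) (Fin m) ℝ) (R : Matrix (Fin d) (Fin d) ℝ) :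
    (Matrix.of fun (i : Fin n) (p : Fin m × Fin d) => u p.1 * S i p.2) * (Q ⊗ₖ R)
      * (Matrix.of fun (i : Fin n) (p : Fin m × Fin d) => w p.1 * S i p.2)ᵀ
    = (u ⬝ᵥ Q *ᵥ w) • (S * R * Sᵀ) := by
  ext i i'
  have L : (((Matrix.of fun (i : Fin n) (p : Fin m × Fin d) => u p.1 * S i p.2) * (Q ⊗ₖ R)
      * (Matrix.of fun (i : Fin n) (p : Fin m × Fin d) => w p.1 * S i p.2)ᵀ)) i i'
      = ∑ p : (Fin m × Fin d) × (Fin m × Fin d),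
          u p.2.1 * S i p.2.2 * (Q p.2.1 p.1.1 * R p.2.2 p.1.2) * (w p.1.1 * S i' p.1.2) := by
    simp [Matrix.mul_apply, Matrix.kroneckerMap_apply, Fintype.sum_prod_type,
      Finset.sum_mul, Finset.mul_sum]
  have Rr : ((u ⬝ᵥ Q *ᵥ w) • (S * R * Sᵀ)) i i'
      = ∑ q : (Fin d × Fin d) × (Fin m × Fin m),
          u q.2.1 * (Q q.2.1 q.2.2 * w q.2.2) * (S i q.1.2 * R q.1.2 q.1.1 * S i' q.1.1) := by
    simp [dotProduct, Matrix.mulVec, Matrix.mul_apply, Fintype.sum_prod_type,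
      Finset.sum_mul, Finset.mul_sum, mul_assoc]
  rw [L, Rr]
  apply Fintype.sum_equiv
    ⟨fun p => ((p.1.2, p.2.2), (p.2.1, p.1.1)), fun q => ((q.2.2, q.1.1), (q.2.1, q.1.2)),
      fun p => rfl, fun q => rfl⟩
  rintro ⟨⟨a, b⟩, ⟨c, e⟩⟩
  simp only [Equiv.coe_fn_mk]
  ring

/-- **MetaVAW is MultiVAW-OHF with Kronecker regularization** (Proposition 2).
With `X_t = x_tᵀ ⊗ S` (realized as the `n × (m·d)` matrix with entry
`(i, (j,l)) ↦ x_t j * S i l`), `Λ_t = λ I_m ⊗ (SᵀS)`,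
`A_t = Λ_t + ∑_{s≤t} XₛᵀXₛ`, `b_{t-1} = ∑_{s<t} Xₛᵀyₛ`, and iterate
`θ_t = A_t⁻¹ b_{t-1}`, the MultiVAW-OHF prediction `X_t θ_t` equals the
MetaVAW prediction
`S(SᵀS)⁻¹Sᵀ (∑_{s<t} yₛxₛᵀ) (λ I_m + ∑_{s≤t} xₛxₛᵀ)⁻¹ x_t`. -/
theorem multivaw_ohf_eq_metavaw
    (T n d m : ℕ)
    (S : Matrix (Fin n) (Fin d) ℝ)
    (hS : LinearIndependent ℝ (fun j : Fin d => fun i : Fin n => S i j))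
    (x : ℕ → Fin m → ℝ) (y : ℕ → Fin n → ℝ)
    (lam : ℝ) (hlam : 0 < lam)
    (X : ℕ → Matrix (Fin n) (Fin m × Fin d) ℝ)
    (hX : ∀ s, X s = Matrix.of fun i p => x s p.1 * S i p.2)
    (t : ℕ) (ht : t ∈ Icc 1 T)
    (Λ : Matrix (Fin m × Fin d) (Fin m × Fin d) ℝ)
    (hΛ : Λ = (lam • (1 : Matrix (Fin m) (Fin m) ℝ)) ⊗ₖ (Sᵀ * S))
    (A : Matrix (Fin m × Fin d) (Fin m × Fin d) ℝ)
    (hA : A = Λ + ∑ s ∈ Icc 1 t, (X s)ᵀ * X s)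
    (b : Fin m × Fin d → ℝ)
    (hb : b = ∑ s ∈ Icc 1 (t - 1), (X s)ᵀ.mulVec (y s))
    (θ : Fin m × Fin d → ℝ)
    (hθ : θ = A⁻¹.mulVec b) :
    (X t).mulVec θ
      = (S * (Sᵀ * S)⁻¹ * Sᵀ * (∑ s ∈ Icc 1 (t - 1), vecMulVec (y s) (x s))
          * ((lam • (1 : Matrix (Fin m) (Fin m) ℝ))
              + ∑ s ∈ Icc 1 t, vecMulVec (x s) (x s))⁻¹).mulVec (x t) := by
  set G : Matrix (Fin d) (Fin d) ℝ := Sᵀ * S with hG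
  set M : Matrix (Fin m) (Fin m) ℝ :=
    (lam • (1 : Matrix (Fin m) (Fin m) ℝ)) + ∑ s ∈ Icc 1 t, vecMulVec (x s) (x s) with hM
  -- A = M ⊗ₖ G
  have hXX : ∀ s, (X s)ᵀ * X s = (vecMulVec (x s) (x s)) ⊗ₖ G := by
    intro s
    ext ⟨j, l⟩ ⟨j', l'⟩
    simp only [hX, Matrix.mul_apply, Matrix.transpose_apply, Matrix.of_apply,
      Matrix.kroneckerMap_apply, vecMulVec_apply, hG, Finset.mul_sum]
    exact Finset.sum_congr rfl fun i _ => by ring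
  have hsum : (∑ s ∈ Icc 1 t, (X s)ᵀ * X s)
      = (∑ s ∈ Icc 1 t, vecMulVec (x s) (x s)) ⊗ₖ G := by
    rw [Finset.sum_congr rfl fun s _ => hXX s]
    ext ⟨j, l⟩ ⟨j', l'⟩
    simp [Matrix.sum_apply, Matrix.kroneckerMap_apply, Finset.sum_mul]
  have hAeq : A = M ⊗ₖ G := by
    rw [hA, hΛ, hsum, hM, Matrix.add_kronecker]
  -- symmetry of M⁻¹
  have hvT : ∀ s, (vecMulVec (x s) (x s))ᵀ = vecMulVec (x s) (x s) := by
    intro s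
    ext j j'
    simp [vecMulVec_apply, mul_comm]
  have hMT : Mᵀ = M := by
    rw [hM, Matrix.transpose_add, Matrix.transpose_smul, Matrix.transpose_one,
      Matrix.transpose_sum]
    rw [Finset.sum_congr rfl fun s _ => hvT s]
  have hMinvT : (M⁻¹)ᵀ = M⁻¹ := by rw [Matrix.transpose_nonsing_inv, hMT]
  have hsymm : ∀ v w : Fin m → ℝ, v ⬝ᵥ M⁻¹ *ᵥ w = w ⬝ᵥ M⁻¹ *ᵥ v := by
    intro v w
    conv_lhs => rw [Matrix.dotProduct_mulVec, ← hMinvT, Matrix.vecMul_transpose]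
    rw [dotProduct_comm]
  -- key sandwich identity
  have key : ∀ s, X t * A⁻¹ * (X s)ᵀ = (x t ⬝ᵥ M⁻¹ *ᵥ x s) • (S * G⁻¹ * Sᵀ) := by
    intro s
    rw [hAeq, Matrix.inv_kronecker, hX t, hX s]
    exact sandwich S (x t) (x s) M⁻¹ G⁻¹
  -- assemble
  rw [hθ, hb, mulVec_finset_sum A⁻¹, mulVec_finset_sum (X t)]
  have lhs_eq : ∀ s, (X t).mulVec (A⁻¹.mulVec ((X s)ᵀ.mulVec (y s)))
      = (x t ⬝ᵥ M⁻¹ *ᵥ x s) • ((S * G⁻¹ * Sᵀ).mulVec (y s)) := by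
    intro s
    rw [Matrix.mulVec_mulVec, Matrix.mulVec_mulVec, key s, Matrix.smul_mulVec]
  rw [Finset.sum_congr rfl fun s _ => lhs_eq s]
  -- right-hand side
  have hPM :
      (S * G⁻¹ * Sᵀ * (∑ s ∈ Icc 1 (t - 1), vecMulVec (y s) (x s)) * M⁻¹).mulVec (x t)
      = ∑ s ∈ Icc 1 (t - 1), (x s ⬝ᵥ M⁻¹ *ᵥ x t) • ((S * G⁻¹ * Sᵀ).mulVec (y s)) := by
    rw [← Matrix.mulVec_mulVec, ← Matrix.mulVec_mulVec]
    rw [show (∑ s ∈ Icc 1 (t - 1), vecMulVec (y s) (x s)).mulVec (M⁻¹.mulVec (x t))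
        = ∑ s ∈ Icc 1 (t - 1), (x s ⬝ᵥ M⁻¹ *ᵥ x t) • y s from by
      rw [finset_sum_mulVec]
      exact Finset.sum_congr rfl fun s _ => vecMulVec_mulVec' _ _ _]
    rw [mulVec_finset_sum]
    exact Finset.sum_congr rfl fun s _ => by rw [Matrix.mulVec_smul]
  rw [hPM]
  exact Finset.sum_congr rfl fun s _ => by rw [hsymm (x t) (x s)]
end
end
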